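/- For a density matrix ρ with sorted eigenvalue vector λ↓(ρ) and a Hermitian matrix A with sorted eigenvalue vectors λ↓(A) (nonincreasing) and λ↑(A) (nondecreasing), the set of achievable values {tr(UρU† A) : U unitary} is the closed real interval [λ↓(ρ)·λ↑(A), λ↓(ρ)·λ↓(A)]. -/

import Mathlib

open Matrix ComplexOrder

/-- `x` rearranged in nondecreasing order. -/
noncomputable def sortAsc {n : ℕ} (x : Fin n → ℝ) : Fin n → ℝ := x ∘ (Tuple.sort x)

/-- `x` rearranged in nonincreasing order. -/
noncomputable def sortDesc {n : ℕ} (x : Fin n → ℝ) : Fin n → ℝ := fun i => sortAsc x i.rev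

/-!
Diagonalise `ρ = W diag(p) W†` and `A = V diag(a) V†`. For a unitary `U`, put `M = V† U W`;
then `tr(UρU†A) = ∑ᵢⱼ aᵢ |Mᵢⱼ|² pⱼ`. The matrix `(|Mᵢⱼ|²)` is doubly stochastic, so by Birkhoff's
theorem the value is a convex combination of the sums `∑ᵢ aᵢ p_{σ i}`, which the rearrangement
inequality confines to the claimed interval. Both endpoints are attained at permutation matrices,
and any two permutation matrices are joined by a path of unitaries (through transpositions),
so the intermediate value theorem fills in the interval.
-/

open Equiv Finset

section Rearrangement

variable {ι : Type*} [Fintype ι]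

lemma sum_comp_perm_mul_le_of_monovary {f g : ι → ℝ} {α β : Perm ι}
    (h : Monovary (f ∘ α) (g ∘ β)) (σ : Perm ι) :
    ∑ i, f (σ i) * g i ≤ ∑ i, f (α i) * g (β i) := by
  rw [← Equiv.sum_comp β]
  simpa using h.sum_comp_perm_mul_le_sum_mul (σ := β.trans (σ.trans α.symm))

lemma sum_le_sum_comp_perm_mul_of_antivary {f g : ι → ℝ} {α β : Perm ι}
    (h : Antivary (f ∘ α) (g ∘ β)) (σ : Perm ι) :
    ∑ i, f (α i) * g (β i) ≤ ∑ i, f (σ i) * g i := by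
  rw [← Equiv.sum_comp β (fun i => f (σ i) * g i)]
  simpa using h.sum_mul_le_sum_comp_perm_mul (σ := β.trans (σ.trans α.symm))

lemma exists_perm_sum_comp_perm_mul_eq (f g : ι → ℝ) (α β : Perm ι) :
    ∃ σ : Perm ι, ∑ i, f (σ i) * g i = ∑ i, f (α i) * g (β i) :=
  ⟨β.symm.trans α, by rw [← Equiv.sum_comp β]; simp⟩

variable {n : ℕ}

lemma monotone_sortAsc (x : Fin n → ℝ) : Monotone (sortAsc x) := Tuple.monotone_sort x

lemma antitone_sortDesc (x : Fin n → ℝ) : Antitone (sortDesc x) :=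
  fun _ _ h => monotone_sortAsc x (Fin.rev_le_rev.mpr h)

lemma sum_comp_perm_mul_le_sum_sortDesc_mul_sortDesc (x y : Fin n → ℝ) (σ : Perm (Fin n)) :
    ∑ i, x (σ i) * y i ≤ ∑ i, sortDesc x i * sortDesc y i :=
  sum_comp_perm_mul_le_of_monovary (α := Fin.revPerm.trans (Tuple.sort x))
    (β := Fin.revPerm.trans (Tuple.sort y)) ((antitone_sortDesc x).monovary (antitone_sortDesc y)) σ

lemma sum_sortDesc_mul_sortAsc_le_sum_comp_perm_mul (x y : Fin n → ℝ) (σ : Perm (Fin n)) :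
    ∑ i, sortDesc x i * sortAsc y i ≤ ∑ i, x (σ i) * y i :=
  sum_le_sum_comp_perm_mul_of_antivary (α := Fin.revPerm.trans (Tuple.sort x))
    (β := Tuple.sort y) ((antitone_sortDesc x).antivary (monotone_sortAsc y)) σ

lemma exists_perm_sum_comp_perm_mul_eq_sum_sortDesc_mul_sortDesc (x y : Fin n → ℝ) :
    ∃ σ : Perm (Fin n), ∑ i, x (σ i) * y i = ∑ i, sortDesc x i * sortDesc y i :=
  exists_perm_sum_comp_perm_mul_eq x y (Fin.revPerm.trans (Tuple.sort x))
    (Fin.revPerm.trans (Tuple.sort y))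

lemma exists_perm_sum_comp_perm_mul_eq_sum_sortDesc_mul_sortAsc (x y : Fin n → ℝ) :
    ∃ σ : Perm (Fin n), ∑ i, x (σ i) * y i = ∑ i, sortDesc x i * sortAsc y i :=
  exists_perm_sum_comp_perm_mul_eq x y (Fin.revPerm.trans (Tuple.sort x)) (Tuple.sort y)

end Rearrangement

lemma map_norm_sq_permMatrix {ι 𝕜 : Type*} [DecidableEq ι] [RCLike 𝕜] (σ : Perm ι) :
    (σ.permMatrix 𝕜).map (‖·‖ ^ 2) = σ.permMatrix ℝ := by
  ext i j
  simp only [map_apply, Perm.permMatrix, PEquiv.toMatrix_apply, toPEquiv_apply, Option.mem_def,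
    Option.some.injEq]
  split_ifs <;> simp

section Stochastic

variable {ι 𝕜 : Type*} [Fintype ι] [DecidableEq ι] [RCLike 𝕜]

lemma dotProduct_mulVec_mem_of_mem_doublyStochastic {D : Matrix ι ι ℝ}
    (hD : D ∈ doublyStochastic ℝ ι) {s : Set ℝ} (hs : Convex ℝ s) {x y : ι → ℝ}
    (h : ∀ σ : Perm ι, ∑ i, x (σ i) * y i ∈ s) : D *ᵥ x ⬝ᵥ y ∈ s := by
  obtain ⟨w, hw0, hw1, rfl⟩ := exists_eq_sum_perm_of_mem_doublyStochastic hD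
  have : (∑ σ : Perm ι, w σ • σ.permMatrix ℝ) *ᵥ x ⬝ᵥ y = ∑ σ, w σ • ∑ i, x (σ i) * y i := by
    simp only [Matrix.sum_mulVec, smul_mulVec, permMatrix_mulVec, sum_dotProduct, smul_dotProduct]
    rfl
  rw [this]
  exact hs.sum_mem (fun σ _ => hw0 σ) hw1 fun σ _ => h σ

lemma map_norm_sq_mem_doublyStochastic {U : Matrix ι ι 𝕜} (hU : U ∈ unitaryGroup ι 𝕜) :
    U.map (‖·‖ ^ 2) ∈ doublyStochastic ℝ ι := by
  have hrow (i : ι) : ∑ j, ‖U i j‖ ^ 2 = 1 := by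
    have := congrFun (congrFun (mem_unitaryGroup_iff.mp hU) i) i
    simp only [mul_apply, star_apply, one_apply_eq, RCLike.star_def, RCLike.mul_conj] at this
    exact_mod_cast this
  have hcol (j : ι) : ∑ i, ‖U i j‖ ^ 2 = 1 := by
    have := congrFun (congrFun (mem_unitaryGroup_iff'.mp hU) j) j
    simp only [mul_apply, star_apply, one_apply_eq, RCLike.star_def, RCLike.conj_mul] at this
    exact_mod_cast this
  rw [mem_doublyStochastic_iff_sum]
  exact ⟨fun i j => sq_nonneg ‖U i j‖, hrow, hcol⟩

lemma trace_mul_diagonal_mul_conjTranspose_mul_diagonal (M : Matrix ι ι 𝕜) (x y : ι → ℝ) :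
    (M * diagonal (RCLike.ofReal ∘ x) * Mᴴ * diagonal (RCLike.ofReal ∘ y)).trace =
      ((M.map (‖·‖ ^ 2) *ᵥ x ⬝ᵥ y : ℝ) : 𝕜) := by
  simp only [trace, diag_apply, mul_diagonal]
  simp only [mul_apply, diagonal_apply, mul_ite, mul_zero, sum_ite_eq', mem_univ, if_true,
    conjTranspose_apply, Function.comp_apply, RCLike.star_def, dotProduct, mulVec, map_apply,
    RCLike.ofReal_sum, RCLike.ofReal_mul, Finset.sum_mul]
  refine sum_congr rfl fun i _ => sum_congr rfl fun j _ => ?_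
  rw [RCLike.ofReal_pow, ← RCLike.mul_conj]
  ring

lemma Matrix.IsHermitian.trace_mul_mul_conjTranspose_mul {A B : Matrix ι ι 𝕜} (hB : B.IsHermitian)
    (hA : A.IsHermitian) (U : Matrix ι ι 𝕜) :
    (U * B * Uᴴ * A).trace =
      (((star (hA.eigenvectorUnitary : Matrix ι ι 𝕜) * U * hB.eigenvectorUnitary).map (‖·‖ ^ 2)
        *ᵥ hB.eigenvalues ⬝ᵥ hA.eigenvalues : ℝ) : 𝕜) := by
  rw [← trace_mul_diagonal_mul_conjTranspose_mul_diagonal]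
  conv_lhs => rw [hB.spectral_theorem, hA.spectral_theorem]
  simp only [Unitary.conjStarAlgAut_apply, conjTranspose_mul, star_eq_conjTranspose,
    conjTranspose_conjTranspose, Matrix.mul_assoc]
  conv_rhs => rw [trace_mul_comm]
  simp only [Matrix.mul_assoc]

end Stochastic

section Path

/-- `(1 + P) / 2` and `(1 - P) / 2` are complementary orthogonal projections, and this element
acts as `1` on the range of the first and as `z` on that of the second. -/
lemma smul_one_add_smul_mem_unitary {A : Type*} [Ring A] [StarRing A] [Algebra ℂ A]
    [StarModule ℂ A] {P : A} (hP : P ∈ unitary A) (hPsa : IsSelfAdjoint P) {z : ℂ}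
    (hz : star z * z = 1) : ((1 + z) / 2) • (1 : A) + ((1 - z) / 2) • P ∈ unitary A := by
  have hPP : P * P = 1 := by simpa [hPsa.star_eq] using Unitary.star_mul_self_of_mem hP
  have hz' : z * star z = 1 := by rwa [mul_comm]
  rw [Unitary.mem_iff]
  simp only [star_add, star_smul, star_one, hPsa.star_eq, add_mul, mul_add, smul_mul_smul,
    one_mul, mul_one, hPP, star_div₀, star_add, star_sub, star_one, star_ofNat]
  constructor
  · linear_combination (norm := module) (1 / 2 : ℂ) • hz • (1 : A) - (1 / 2 : ℂ) • hz • P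
  · linear_combination (norm := module) (1 / 2 : ℂ) • hz' • (1 : A) - (1 / 2 : ℂ) • hz' • P

lemma Unitary.joined_one_of_isSelfAdjoint {A : Type*} [Ring A] [StarRing A] [Algebra ℂ A]
    [StarModule ℂ A] [TopologicalSpace A] [ContinuousAdd A] [ContinuousSMul ℂ A]
    {P : unitary A} (hP : IsSelfAdjoint (P : A)) : Joined 1 P := by
  let z : ℝ → ℂ := fun t => Complex.exp (↑(Real.pi * t) * Complex.I)
  have hz (t : ℝ) : star (z t) * z t = 1 := by
    rw [RCLike.star_def, RCLike.conj_mul, Complex.norm_exp_ofReal_mul_I]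
    simp
  refine ⟨⟨⟨fun t => ⟨((1 + z t) / 2) • (1 : A) + ((1 - z t) / 2) • (P : A),
      smul_one_add_smul_mem_unitary P.2 hP (hz t)⟩, ?_⟩, ?_, ?_⟩⟩
  · fun_prop
  · ext; simp [z]
  · ext; simp [z]

lemma permMatrix_mem_unitaryGroup {ι R : Type*} [Fintype ι] [DecidableEq ι] [CommRing R]
    [StarRing R] (σ : Perm ι) : σ.permMatrix R ∈ unitaryGroup ι R := by
  simp [mem_unitaryGroup_iff', star_eq_conjTranspose, conjTranspose_permMatrix, ← permMatrix_mul]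

lemma joined_one_permMatrix {ι : Type*} [Fintype ι] [DecidableEq ι] (σ : Perm ι) :
    Joined (1 : unitaryGroup ι ℂ) ⟨σ.permMatrix ℂ, permMatrix_mem_unitaryGroup σ⟩ := by
  induction σ using Perm.swap_induction_on with
  | one => convert Joined.refl _; exact permMatrix_one
  | swap_mul f x y _ ih =>
    have hswap : Joined (1 : unitaryGroup ι ℂ)
        ⟨(swap x y).permMatrix ℂ, permMatrix_mem_unitaryGroup _⟩ :=
      Unitary.joined_one_of_isSelfAdjoint <| by
        simp [IsSelfAdjoint, star_eq_conjTranspose, conjTranspose_permMatrix]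
    convert ih.mul hswap using 1
    · simp
    · exact Subtype.ext (permMatrix_mul _ _)

end Path

section Orbit

variable {n : ℕ}

lemma map_norm_sq_mulVec_dotProduct_mem_Icc {𝕜 : Type*} [RCLike 𝕜] {U : Matrix (Fin n) (Fin n) 𝕜}
    (hU : U ∈ unitaryGroup (Fin n) 𝕜) (x y : Fin n → ℝ) :
    U.map (‖·‖ ^ 2) *ᵥ x ⬝ᵥ y ∈
      Set.Icc (∑ i, sortDesc x i * sortAsc y i) (∑ i, sortDesc x i * sortDesc y i) :=
  dotProduct_mulVec_mem_of_mem_doublyStochastic (map_norm_sq_mem_doublyStochastic hU)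
    (convex_Icc _ _) fun σ => ⟨sum_sortDesc_mul_sortAsc_le_sum_comp_perm_mul x y σ,
      sum_comp_perm_mul_le_sum_sortDesc_mul_sortDesc x y σ⟩

lemma Icc_subset_range_map_norm_sq_mulVec_dotProduct (x y : Fin n → ℝ) :
    Set.Icc (∑ i, sortDesc x i * sortAsc y i) (∑ i, sortDesc x i * sortDesc y i) ⊆
      Set.range fun U : unitaryGroup (Fin n) ℂ =>
        (U : Matrix (Fin n) (Fin n) ℂ).map (‖·‖ ^ 2) *ᵥ x ⬝ᵥ y := by
  obtain ⟨σlo, hlo⟩ := exists_perm_sum_comp_perm_mul_eq_sum_sortDesc_mul_sortAsc x y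
  obtain ⟨σhi, hhi⟩ := exists_perm_sum_comp_perm_mul_eq_sum_sortDesc_mul_sortDesc x y
  have hperm (σ : Perm (Fin n)) :
      (σ.permMatrix ℂ).map (‖·‖ ^ 2) *ᵥ x ⬝ᵥ y = ∑ i, x (σ i) * y i := by
    rw [map_norm_sq_permMatrix, permMatrix_mulVec]
    rfl
  have hcont : Continuous fun U : unitaryGroup (Fin n) ℂ =>
      (U : Matrix (Fin n) (Fin n) ℂ).map (‖·‖ ^ 2) *ᵥ x ⬝ᵥ y := by fun_prop
  let γ := ((joined_one_permMatrix σlo).symm.trans (joined_one_permMatrix σhi)).somePath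
  have hivt := intermediate_value_univ 0 1 (hcont.comp γ.continuous)
  simp only [Function.comp_apply, Path.source, Path.target] at hivt
  rw [← hlo, ← hhi, ← hperm, ← hperm]
  exact hivt.trans (Set.range_comp_subset_range _ _)

end Orbit

theorem trace_unitary_orbit_eq_Icc_general {n : ℕ} (ρ A : Matrix (Fin n) (Fin n) ℂ)
    (hρ : ρ.PosSemidef) (hA : A.IsHermitian) :
    {r : ℝ | ∃ U ∈ Matrix.unitaryGroup (Fin n) ℂ, r = ((U * ρ * Uᴴ * A).trace).re} =
      Set.Icc (∑ i, sortDesc hρ.1.eigenvalues i * sortAsc hA.eigenvalues i)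
        (∑ i, sortDesc hρ.1.eigenvalues i * sortDesc hA.eigenvalues i) := by
  have hvalue := hρ.1.trace_mul_mul_conjTranspose_mul hA
  generalize hA.eigenvectorUnitary = V, hρ.1.eigenvectorUnitary = W at hvalue
  ext r
  constructor
  · rintro ⟨U, hU, rfl⟩
    rw [hvalue, ← RCLike.re_to_complex, RCLike.ofReal_re]
    exact map_norm_sq_mulVec_dotProduct_mem_Icc
      (mul_mem (mul_mem (Unitary.star_mem V.2) hU) W.2) _ _
  · intro hr
    obtain ⟨M, rfl⟩ := Icc_subset_range_map_norm_sq_mulVec_dotProduct _ _ hr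
    have hcancel : star (V : Matrix (Fin n) (Fin n) ℂ) * (V * M * (star W : unitaryGroup _ _)) * W
        = M := by
      rw [Unitary.coe_star, ← mul_assoc, ← mul_assoc, Unitary.coe_star_mul_self, one_mul,
        mul_assoc, Unitary.coe_star_mul_self, mul_one]
    refine ⟨V * M * star W, (V * M * star W).2, ?_⟩
    rw [hvalue, ← RCLike.re_to_complex, RCLike.ofReal_re, hcancel]

/-- The achievable values of `tr(UρU†A)` over all unitaries `U` form the closed interval
`[λ↓(ρ)·λ↑(A), λ↓(ρ)·λ↓(A)]`. -/
theorem trace_unitary_orbit_eq_Icc {n : ℕ} (ρ A : Matrix (Fin n) (Fin n) ℂ)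
    (hρ : ρ.PosSemidef) (htr : ρ.trace = 1) (hA : A.IsHermitian) :
    {r : ℝ | ∃ U ∈ Matrix.unitaryGroup (Fin n) ℂ, r = ((U * ρ * Uᴴ * A).trace).re} =
      Set.Icc (∑ i, sortDesc hρ.1.eigenvalues i * sortAsc hA.eigenvalues i)
        (∑ i, sortDesc hρ.1.eigenvalues i * sortDesc hA.eigenvalues i) :=
  trace_unitary_orbit_eq_Icc_general ρ A hρ hA
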